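/- arXiv:2301.09826 — 3 statements merged into one kernel-verified Lean document; each statement's English description precedes it below -/
import Mathlib

section
/- Let x₁,…,x₄ and y₁,…,y₄ be points of ℙ¹ represented by nonzero vectors in ℂ². Then the 4×4 matrix Z₄ with rows xᵢᵀ ⊗ yᵢᵀ satisfies det(Z₄) = [14]_x[23]_x[13]_y[24]_y − [13]_x[24]_x[14]_y[23]_y, where [ij]_x = det(xᵢ, xⱼ) is the 2×2 determinant of the matrix with rows xᵢᵀ, xⱼᵀ, and similarly for [ij]_y. -/
open Matrix

/-- The 2×2 bracket `[ij]` of two vectors `u, v ∈ ℂ²`: `u₁v₂ − u₂v₁`. -/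
def br2 (u v : Fin 2 → ℂ) : ℂ := u 0 * v 1 - u 1 * v 0

theorem Matrix.det_fin_four {R : Type*} [CommRing R] (A : Matrix (Fin 4) (Fin 4) R) :
    A.det =
      A 0 0 * (A 1 1 * A 2 2 * A 3 3 - A 1 1 * A 2 3 * A 3 2 - A 1 2 * A 2 1 * A 3 3
          + A 1 2 * A 2 3 * A 3 1 + A 1 3 * A 2 1 * A 3 2 - A 1 3 * A 2 2 * A 3 1)
      - A 0 1 * (A 1 0 * A 2 2 * A 3 3 - A 1 0 * A 2 3 * A 3 2 - A 1 2 * A 2 0 * A 3 3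
          + A 1 2 * A 2 3 * A 3 0 + A 1 3 * A 2 0 * A 3 2 - A 1 3 * A 2 2 * A 3 0)
      + A 0 2 * (A 1 0 * A 2 1 * A 3 3 - A 1 0 * A 2 3 * A 3 1 - A 1 1 * A 2 0 * A 3 3
          + A 1 1 * A 2 3 * A 3 0 + A 1 3 * A 2 0 * A 3 1 - A 1 3 * A 2 1 * A 3 0)
      - A 0 3 * (A 1 0 * A 2 1 * A 3 2 - A 1 0 * A 2 2 * A 3 1 - A 1 1 * A 2 0 * A 3 2
          + A 1 1 * A 2 2 * A 3 0 + A 1 2 * A 2 0 * A 3 1 - A 1 2 * A 2 1 * A 3 0) := by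
  simp only [det_succ_row_zero, Fin.sum_univ_succ, submatrix_apply,
    det_unique, Finset.univ_unique, Finset.sum_singleton, Fin.default_eq_zero,
    Fin.zero_succAbove, Fin.succ_succAbove_zero, Fin.succ_succAbove_succ, Fin.val_zero, Fin.val_succ]
  simp only [Fin.succ_zero_eq_one, Fin.succ_one_eq_two, Fin.reduceSucc]
  ring

/-- For `x₁,…,x₄, y₁,…,y₄ ∈ ℂ²`, the 4×4 matrix `Z₄` with rows `xᵢᵀ ⊗ yᵢᵀ` satisfies
`det Z₄ = [14]_x[23]_x[13]_y[24]_y − [13]_x[24]_x[14]_y[23]_y`. -/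
theorem stmt3 (x y : Fin 4 → Fin 2 → ℂ) :
    (Matrix.of fun i : Fin 4 =>
        ![x i 0 * y i 0, x i 0 * y i 1, x i 1 * y i 0, x i 1 * y i 1]).det =
      br2 (x 0) (x 3) * br2 (x 1) (x 2) * br2 (y 0) (y 2) * br2 (y 1) (y 3) -
        br2 (x 0) (x 2) * br2 (x 1) (x 3) * br2 (y 0) (y 3) * br2 (y 1) (y 2) := by
  rw [det_fin_four]
  simp only [of_apply, cons_val, br2]
  ring
end

section
/- Let x₁,…,x₄ ∈ ℂ² be pairwise non-parallel and y₁,…,y₄ ∈ ℂ² be pairwise non-parallel. Then the 4×4 matrix Z₄ with rows xᵢᵀ ⊗ yᵢᵀ is singular if and only if there exists an invertible 2×2 matrix H such that Hxᵢ is a scalar multiple of yᵢ for each i = 1,…,4. -/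
/-!
A nonzero kernel vector of `Z₄` is a nonzero `2 × 2` matrix `M` with `xᵢᵀ M yᵢ = 0` for all `i`.
Such an `M` cannot have rank one: if `M = u wᵀ`, every `i` has `xᵢ ⊥ u` or `yᵢ ⊥ w`, so by
pigeonhole two of the `xᵢ` or two of the `yᵢ` lie on the same line. Hence `M` is invertible, and
writing `M = Hᵀ J` with `J` the quarter turn, `xᵢᵀ M yᵢ = det (H xᵢ, yᵢ)`, which vanishes exactly
when `H xᵢ` is a multiple of `yᵢ`.
-/

open Matrix

variable {K : Type*} [Field K]

def quarterTurn : Matrix (Fin 2) (Fin 2) K := !![0, 1; -1, 0]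

@[simp]
theorem dotProduct_quarterTurn_mulVec (a b : Fin 2 → K) :
    a ⬝ᵥ quarterTurn *ᵥ b = a 0 * b 1 - a 1 * b 0 := by
  simp [quarterTurn, dotProduct, mulVec, Fin.sum_univ_two]
  ring

theorem det_transpose_mul_quarterTurn (H : Matrix (Fin 2) (Fin 2) K) :
    (Hᵀ * quarterTurn).det = H.det := by
  simp [det_mul, quarterTurn, det_fin_two_of]

theorem quarterTurn_mul_self : (quarterTurn : Matrix (Fin 2) (Fin 2) K) * quarterTurn = -1 := by
  ext i j; fin_cases i <;> fin_cases j <;> simp [quarterTurn]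

theorem transpose_mul_quarterTurn_dotProduct (H : Matrix (Fin 2) (Fin 2) K) (x y : Fin 2 → K) :
    x ⬝ᵥ (Hᵀ * quarterTurn) *ᵥ y = H *ᵥ x ⬝ᵥ quarterTurn *ᵥ y := by
  rw [← mulVec_mulVec, dotProduct_mulVec, vecMul_transpose]

theorem exists_smul_eq_iff_dotProduct_quarterTurn_mulVec_eq_zero {a b : Fin 2 → K} (hb : b ≠ 0) :
    (∃ c : K, a = c • b) ↔ a ⬝ᵥ quarterTurn *ᵥ b = 0 := by
  rw [dotProduct_quarterTurn_mulVec]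
  constructor
  · rintro ⟨c, rfl⟩
    simp only [Pi.smul_apply, smul_eq_mul]; ring
  · intro h
    by_cases hb0 : b 0 = 0
    · have hb1 : b 1 ≠ 0 := fun hb1 => hb (by ext i; fin_cases i <;> simp [hb0, hb1])
      refine ⟨a 1 / b 1, ?_⟩
      ext i; fin_cases i
      · have ha0 : a 0 = 0 := by simpa [hb0, hb1] using h
        simp [ha0, hb0]
      · simp [hb1]
    · refine ⟨a 0 / b 0, ?_⟩
      ext i; fin_cases i
      · simp [hb0]
      · simp only [Fin.mk_one, Pi.smul_apply, smul_eq_mul]; field_simp; linear_combination -h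

theorem exists_smul_eq_of_dotProduct_eq_zero {u a b : Fin 2 → K} (hu : u ≠ 0) (ha : a ≠ 0)
    (hau : a ⬝ᵥ u = 0) (hbu : b ⬝ᵥ u = 0) : ∃ c : K, b = c • a := by
  simp only [dotProduct, Fin.sum_univ_two] at hau hbu
  rw [exists_smul_eq_iff_dotProduct_quarterTurn_mulVec_eq_zero ha, dotProduct_quarterTurn_mulVec]
  by_contra h
  apply hu
  ext i; fin_cases i
  · simpa [h] using (by linear_combination a 1 * hbu - b 1 * hau :
      (b 0 * a 1 - b 1 * a 0) * u 0 = 0)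
  · simpa [h] using (by linear_combination b 0 * hau - a 0 * hbu :
      (b 0 * a 1 - b 1 * a 0) * u 1 = 0)

theorem exists_eq_vecMulVec_of_det_eq_zero {M : Matrix (Fin 2) (Fin 2) K} (hM : M ≠ 0)
    (hdet : M.det = 0) : ∃ u w : Fin 2 → K, u ≠ 0 ∧ w ≠ 0 ∧ M = vecMulVec u w := by
  by_cases hM0 : M 0 = 0
  · refine ⟨![0, 1], M 1, by simp, fun hM1 => hM ?_, ?_⟩
    all_goals ext i j; fin_cases i <;> simp [vecMulVec, *]
  · have hM10 : M 1 ⬝ᵥ quarterTurn *ᵥ M 0 = 0 := by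
      rw [det_fin_two] at hdet
      rw [dotProduct_quarterTurn_mulVec]
      linear_combination -hdet
    obtain ⟨t, ht⟩ := (exists_smul_eq_iff_dotProduct_quarterTurn_mulVec_eq_zero hM0).mpr hM10
    refine ⟨![1, t], M 0, by simp, hM0, ?_⟩
    ext i j; fin_cases i <;> simp [vecMulVec, ht]

theorem Fintype.exists_ne_and_or_of_two_lt_card {ι : Type*} [Fintype ι] (hι : 2 < Fintype.card ι)
    {P Q : ι → Prop} (h : ∀ i, P i ∨ Q i) : ∃ i j, i ≠ j ∧ (P i ∧ P j ∨ Q i ∧ Q j) := by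
  obtain ⟨i, j, hij, hPij⟩ := Fintype.exists_ne_map_eq_of_card_lt P (by rwa [Fintype.card_prop])
  by_cases hPi : P i
  · exact ⟨i, j, hij, .inl ⟨hPi, hPij ▸ hPi⟩⟩
  · exact ⟨i, j, hij, .inr ⟨(h i).resolve_left hPi, (h j).resolve_left (hPij ▸ hPi)⟩⟩

section

variable {ι : Type*} {x y : ι → Fin 2 → K}

theorem ne_zero_of_not_exists_smul_eq {i j : ι} (h : ¬ ∃ c : K, x j = c • x i) : x j ≠ 0 :=
  fun hj => h ⟨0, by simp [hj]⟩

theorem det_ne_zero_of_dotProduct_mulVec_eq_zero [Fintype ι] (hι : 2 < Fintype.card ι)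
    (hx : ∀ i j, i ≠ j → ¬ ∃ c : K, x j = c • x i)
    (hy : ∀ i j, i ≠ j → ¬ ∃ c : K, y j = c • y i)
    {M : Matrix (Fin 2) (Fin 2) K} (hM : M ≠ 0) (hMxy : ∀ i, x i ⬝ᵥ M *ᵥ y i = 0) :
    M.det ≠ 0 := by
  intro hdet
  obtain ⟨u, w, hu, hw, rfl⟩ := exists_eq_vecMulVec_of_det_eq_zero hM hdet
  have hxy : ∀ i, x i ⬝ᵥ u = 0 ∨ y i ⬝ᵥ w = 0 := fun i => by
    have := hMxy i
    rwa [vecMulVec_mulVec, op_smul_eq_smul, dotProduct_smul, smul_eq_mul, mul_eq_zero,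
      dotProduct_comm w, or_comm] at this
  obtain ⟨i, j, hij, ⟨hi, hj⟩ | ⟨hi, hj⟩⟩ := Fintype.exists_ne_and_or_of_two_lt_card hι hxy
  · exact hx i j hij (exists_smul_eq_of_dotProduct_eq_zero hu
      (ne_zero_of_not_exists_smul_eq (hx j i hij.symm)) hi hj)
  · exact hy i j hij (exists_smul_eq_of_dotProduct_eq_zero hw
      (ne_zero_of_not_exists_smul_eq (hy j i hij.symm)) hi hj)

theorem exists_isUnit_det_mulVec_eq_smul_iff (hy : ∀ i, y i ≠ 0) :
    (∃ H : Matrix (Fin 2) (Fin 2) K, IsUnit H.det ∧ ∀ i, ∃ c : K, H *ᵥ x i = c • y i) ↔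
      ∃ M : Matrix (Fin 2) (Fin 2) K, M.det ≠ 0 ∧ ∀ i, x i ⬝ᵥ M *ᵥ y i = 0 := by
  simp only [exists_smul_eq_iff_dotProduct_quarterTurn_mulVec_eq_zero (hy _),
    ← transpose_mul_quarterTurn_dotProduct, isUnit_iff_ne_zero]
  constructor
  · rintro ⟨H, hH, hHxy⟩
    exact ⟨Hᵀ * quarterTurn, by rwa [det_transpose_mul_quarterTurn], hHxy⟩
  · rintro ⟨M, hM, hMxy⟩
    have hM_eq : M = (-(M * quarterTurn))ᵀᵀ * quarterTurn := by
      simp [Matrix.mul_assoc, quarterTurn_mul_self]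
    rw [hM_eq, det_transpose_mul_quarterTurn] at hM
    exact ⟨_, hM, fun i => hM_eq ▸ hMxy i⟩

end

/-- The matrix whose `i`-th row is the Kronecker product `x i ⊗ y i`. -/
def kroneckerRows {ι : Type*} (x y : ι → Fin 2 → K) : Matrix ι (Fin 4) K :=
  Matrix.of fun i => ![x i 0 * y i 0, x i 0 * y i 1, x i 1 * y i 0, x i 1 * y i 1]

theorem kroneckerRows_mulVec {ι : Type*} (x y : ι → Fin 2 → K) (v : Fin 4 → K) :
    kroneckerRows x y *ᵥ v = fun i => x i ⬝ᵥ !![v 0, v 1; v 2, v 3] *ᵥ y i := by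
  ext i
  simp [kroneckerRows, mulVec, dotProduct, Fin.sum_univ_four, Fin.sum_univ_two]
  ring

theorem det_kroneckerRows_eq_zero_iff (x y : Fin 4 → Fin 2 → K) :
    (kroneckerRows x y).det = 0 ↔
      ∃ M : Matrix (Fin 2) (Fin 2) K, M ≠ 0 ∧ ∀ i, x i ⬝ᵥ M *ᵥ y i = 0 := by
  rw [← exists_mulVec_eq_zero_iff]
  simp only [kroneckerRows_mulVec, funext_iff, Pi.zero_apply]
  constructor
  · rintro ⟨v, hv, hxy⟩
    refine ⟨_, fun h => hv ?_, hxy⟩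
    ext k; fin_cases k
    exacts [congrFun₂ h 0 0, congrFun₂ h 0 1, congrFun₂ h 1 0, congrFun₂ h 1 1]
  · rintro ⟨M, hM, hxy⟩
    refine ⟨![M 0 0, M 0 1, M 1 0, M 1 1], fun h => hM ?_, ?_⟩
    · ext i j; fin_cases i <;> fin_cases j
      exacts [congrFun h 0, congrFun h 1, congrFun h 2, congrFun h 3]
    · convert hxy using 4; exact (eta_fin_two M).symm

/-- For `x₁,…,x₄ ∈ ℂ²` pairwise non-parallel and `y₁,…,y₄ ∈ ℂ²` pairwise non-parallel,
the 4×4 matrix `Z₄` with rows `xᵢᵀ ⊗ yᵢᵀ` is singular iff there exists an invertible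
2×2 matrix `H` with `Hxᵢ` a scalar multiple of `yᵢ` for each `i`. -/
theorem stmt4 (x y : Fin 4 → Fin 2 → ℂ)
    (hx : ∀ i j, i ≠ j → ¬ ∃ c : ℂ, x j = c • x i)
    (hy : ∀ i j, i ≠ j → ¬ ∃ c : ℂ, y j = c • y i) :
    (Matrix.of fun i : Fin 4 =>
        ![x i 0 * y i 0, x i 0 * y i 1, x i 1 * y i 0, x i 1 * y i 1]).det = 0 ↔
      ∃ H : Matrix (Fin 2) (Fin 2) ℂ, IsUnit H.det ∧
        ∀ i, ∃ c : ℂ, H *ᵥ x i = c • y i := by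
  have hy0 : ∀ i, y i ≠ 0 := fun i =>
    ne_zero_of_not_exists_smul_eq (hy (i + 1) i (by simp))
  rw [exists_isUnit_det_mulVec_eq_smul_iff hy0]
  refine (det_kroneckerRows_eq_zero_iff x y).trans ⟨?_, ?_⟩
  · rintro ⟨M, hM, hMxy⟩
    exact ⟨M, det_ne_zero_of_dotProduct_mulVec_eq_zero (by simp) hx hy hM hMxy, hMxy⟩
  · rintro ⟨M, hM, hMxy⟩
    exact ⟨M, fun h => hM (by simp [h]), hMxy⟩
end

section
/- Let x₁,…,x₄ ∈ ℂ³ be of the form xᵢ = (aᵢ, 0, 1) and y₁,…,y₄ ∈ ℂ³ of the form yᵢ = (bᵢ, 0, 1) (so both quadruples lie on a common line of ℙ²). Then the 4×9 matrix Z₄ with rows xᵢᵀ ⊗ yᵢᵀ is rank deficient (rank < 4) if and only if det M = 0, where M is the 4×4 matrix with i-th row (aᵢbᵢ, aᵢ, bᵢ, 1); moreover det M = [14]_x[23]_x[13]_y[24]_y − [13]_x[24]_x[14]_y[23]_y, with [ij]_x = aᵢ − aⱼ (bracket of (aᵢ,1),(aⱼ,1)) and [ij]_y = bᵢ − bⱼ.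 -/
open Matrix

lemma rank_lt_iff_det_eq_zero (M : Matrix (Fin 4) (Fin 4) ℂ) :
    M.rank < 4 ↔ M.det = 0 := by
  constructor
  · intro h
    by_contra hd
    have : M.rank = 4 := by
      simpa using M.rank_of_isUnit ((Matrix.isUnit_iff_isUnit_det M).2 (isUnit_iff_ne_zero.2 hd))
    omega
  · intro hd
    obtain ⟨v, hv, hMv⟩ := (Matrix.exists_mulVec_eq_zero_iff).2 hd
    have hker : 0 < Module.finrank ℂ (LinearMap.ker M.mulVecLin) := by
      rw [Module.finrank_pos_iff]
      exact ⟨⟨⟨v, by simpa using hMv⟩, 0, by simp [hv]⟩⟩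
    have hsum := LinearMap.finrank_range_add_finrank_ker M.mulVecLin
    have hdim : Module.finrank ℂ (Fin 4 → ℂ) = 4 := by simp
    rw [hdim] at hsum
    have : M.rank = Module.finrank ℂ (LinearMap.range M.mulVecLin) := rfl
    omega

/-- For `xᵢ = (aᵢ, 0, 1)` and `yᵢ = (bᵢ, 0, 1)` (both quadruples on a common line of
ℙ²), the 4×9 matrix `Z₄` with rows `xᵢᵀ ⊗ yᵢᵀ` is rank deficient iff `det M = 0`,
where `M` has `i`-th row `(aᵢbᵢ, aᵢ, bᵢ, 1)`; moreover
`det M = [14]_x[23]_x[13]_y[24]_y − [13]_x[24]_x[14]_y[23]_y` with `[ij]_x = aᵢ − aⱼ`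
and `[ij]_y = bᵢ − bⱼ`. -/
theorem stmt11 (a b : Fin 4 → ℂ) :
    ((Matrix.of fun (i : Fin 4) (p : Fin 3 × Fin 3) =>
        (![a i, 0, 1] : Fin 3 → ℂ) p.1 * (![b i, 0, 1] : Fin 3 → ℂ) p.2).rank < 4 ↔
      (Matrix.of fun i : Fin 4 => ![a i * b i, a i, b i, 1]).det = 0) ∧
    (Matrix.of fun i : Fin 4 => ![a i * b i, a i, b i, 1]).det =
      (a 0 - a 3) * (a 1 - a 2) * (b 0 - b 2) * (b 1 - b 3) -
        (a 0 - a 2) * (a 1 - a 3) * (b 0 - b 3) * (b 1 - b 2) := by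
  set Z : Matrix (Fin 4) (Fin 3 × Fin 3) ℂ :=
    Matrix.of fun (i : Fin 4) (p : Fin 3 × Fin 3) =>
      (![a i, 0, 1] : Fin 3 → ℂ) p.1 * (![b i, 0, 1] : Fin 3 → ℂ) p.2 with hZ
  set M : Matrix (Fin 4) (Fin 4) ℂ :=
    Matrix.of fun i : Fin 4 => ![a i * b i, a i, b i, 1] with hM
  have e1 : Fin 4 → Fin 3 := ![0, 0, 2, 2]
  set E : Matrix (Fin 4) (Fin 3 × Fin 3) ℂ :=
    Matrix.of fun (j : Fin 4) (p : Fin 3 × Fin 3) =>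
      if p.1 = (![0, 0, 2, 2] : Fin 4 → Fin 3) j ∧ p.2 = (![0, 2, 0, 2] : Fin 4 → Fin 3) j
      then 1 else 0 with hE
  have hZME : Z = M * E := by
    ext i ⟨p1, p2⟩
    fin_cases p1 <;> fin_cases p2 <;>
      simp [hZ, hM, hE, Matrix.mul_apply, Fin.sum_univ_four]
  have hMZF : M = Z * Eᵀ := by
    ext i j
    fin_cases j <;>
      simp [hZ, hM, hE, Matrix.mul_apply, Fintype.sum_prod_type, Fin.sum_univ_three]
  have hrank : Z.rank = M.rank := by
    apply le_antisymm
    · rw [hZME]; exact Matrix.rank_mul_le_left M E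
    · rw [hMZF]; exact Matrix.rank_mul_le_left Z Eᵀ
  refine ⟨by rw [hrank]; exact rank_lt_iff_det_eq_zero M, ?_⟩
  rw [hM]
  have h3 : (Fin.succ 2 : Fin 4) = 3 := rfl
  have h2 : (Fin.castSucc 2 : Fin 4) = 2 := rfl
  simp [Matrix.det_succ_row_zero, Fin.sum_univ_succ, Fin.succAbove, h3, h2]
  ring
end
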